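/- arXiv:2407.19389 — 7 statements merged into one kernel-verified Lean document; each statement's English description precedes it below -/
import Mathlib

section
/- Let N and A be positive integers with A ≤ N, let S be a subset of a finite index set of size N with |S| = n ≥ 1, and let v : [N] → E be a family of vectors in a real vector space E. For each subset 𝒜 ⊆ [N] with |𝒜| = A, define m(𝒜) = (1/|𝒜 ∩ S|) · Σ_{i ∈ 𝒜 ∩ S} v_i if 𝒜 ∩ S ≠ ∅, and m(𝒜) = 0 otherwise. Then the average of m(𝒜) over all C(N,A) subsets 𝒜 of size A equals ((C(N,A) − C(N−n,A)) / (n · C(N,A))) · Σ_{i ∈ S} v_i, where the binomial coefficient C(N−n,A) is taken to be 0 when A > N−n. (Paper's Lemma 1, stating the expectation of the partial-averaging aggregation operator under uniform sampling of A clients without replacement.) -/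
/-- Paper's Lemma 1: the expectation of the partial-averaging aggregation operator
under uniform sampling of `A` clients without replacement. The average over all
`C(N,A)` subsets `𝒜` of size `A` of `m(𝒜)` (the mean of `v` over `𝒜 ∩ S`, or `0`
if the intersection is empty) equals
`((C(N,A) − C(N−n,A)) / (n · C(N,A))) • ∑ i ∈ S, v i`. -/
theorem stmt0 {E : Type*} [AddCommGroup E] [Module ℝ E]
    (N A : ℕ) (hA : 0 < A) (hAN : A ≤ N)
    (S : Finset (Fin N)) (hS : 1 ≤ S.card)
    (v : Fin N → E) :
    ((N.choose A : ℝ))⁻¹ •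
      ∑ 𝒜 ∈ Finset.powersetCard A (Finset.univ : Finset (Fin N)),
        (if (𝒜 ∩ S).Nonempty then (((𝒜 ∩ S).card : ℝ))⁻¹ • ∑ i ∈ 𝒜 ∩ S, v i else 0) =
    (((N.choose A : ℝ) - ((N - S.card).choose A : ℝ)) / (S.card * (N.choose A : ℝ))) •
      ∑ i ∈ S, v i := by
  classical
  set P := Finset.powersetCard A (Finset.univ : Finset (Fin N)) with hP
  set c : Fin N → ℝ := fun i => ∑ 𝒜 ∈ P, (if i ∈ 𝒜 then ((𝒜 ∩ S).card : ℝ)⁻¹ else 0)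
    with hc
  obtain ⟨i₀, hi₀⟩ := Finset.card_pos.mp hS
  -- Step 1: rewrite each term
  have hterm : ∀ 𝒜 : Finset (Fin N),
      (if (𝒜 ∩ S).Nonempty then (((𝒜 ∩ S).card : ℝ))⁻¹ • ∑ i ∈ 𝒜 ∩ S, v i else 0)
      = ∑ i ∈ S, (if i ∈ 𝒜 then ((𝒜 ∩ S).card : ℝ)⁻¹ else 0) • v i := by
    intro 𝒜
    have hfilter : S.filter (fun i => i ∈ 𝒜) = 𝒜 ∩ S := by
      ext a; simp [Finset.mem_inter, and_comm]
    by_cases h : (𝒜 ∩ S).Nonempty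
    · rw [if_pos h, Finset.smul_sum]
      rw [show (∑ i ∈ S, (if i ∈ 𝒜 then ((𝒜 ∩ S).card : ℝ)⁻¹ else 0) • v i)
          = ∑ i ∈ S, (if i ∈ 𝒜 then ((𝒜 ∩ S).card : ℝ)⁻¹ • v i else 0) by
        apply Finset.sum_congr rfl; intro i _; split <;> simp]
      rw [← Finset.sum_filter, hfilter]
    · rw [if_neg h]
      have he : 𝒜 ∩ S = ∅ := Finset.not_nonempty_iff_eq_empty.mp h
      symm
      apply Finset.sum_eq_zero
      intro i hiS
      have : i ∉ 𝒜 := by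
        intro hiA
        have : i ∈ 𝒜 ∩ S := Finset.mem_inter.mpr ⟨hiA, hiS⟩
        simp [he] at this
      simp [this]
  -- Step 2: swap sums
  have h2 : ∑ 𝒜 ∈ P, (if (𝒜 ∩ S).Nonempty then (((𝒜 ∩ S).card : ℝ))⁻¹ • ∑ i ∈ 𝒜 ∩ S, v i else 0)
      = ∑ i ∈ S, c i • v i := by
    rw [Finset.sum_congr rfl (fun 𝒜 _ => hterm 𝒜), Finset.sum_comm]
    apply Finset.sum_congr rfl
    intro i _
    rw [hc, Finset.sum_smul]
  -- Step 3: symmetry: c is constant on S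
  have hsym : ∀ i ∈ S, c i = c i₀ := by
    intro i hi
    have hSmem : ∀ a : Fin N, Equiv.swap i i₀ a ∈ S ↔ a ∈ S := by
      intro a
      rcases eq_or_ne a i with rfl | h1
      · simp [Equiv.swap_apply_left, hi, hi₀]
      rcases eq_or_ne a i₀ with rfl | h2
      · simp [Equiv.swap_apply_right, hi, hi₀]
      · rw [Equiv.swap_apply_of_ne_of_ne h1 h2]
    have hmapS : ∀ 𝒜 : Finset (Fin N),
        (𝒜.map (Equiv.swap i i₀).toEmbedding) ∩ S = (𝒜 ∩ S).map (Equiv.swap i i₀).toEmbedding := by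
      intro 𝒜
      ext a
      simp only [Finset.mem_inter, Finset.mem_map_equiv]
      have : (Equiv.swap i i₀).symm a ∈ S ↔ a ∈ S := by
        rw [Equiv.symm_swap]; exact hSmem a
      tauto
    rw [hc]
    apply Finset.sum_nbij' (i := fun 𝒜 => 𝒜.map (Equiv.swap i i₀).toEmbedding)
      (j := fun 𝒜 => 𝒜.map (Equiv.swap i i₀).toEmbedding)
    · intro 𝒜 h𝒜
      rw [hP, Finset.mem_powersetCard] at h𝒜 ⊢
      simp [Finset.card_map, h𝒜.2]
    · intro 𝒜 h𝒜
      rw [hP, Finset.mem_powersetCard] at h𝒜 ⊢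
      simp [Finset.card_map, h𝒜.2]
    · intro 𝒜 _
      ext a
      simp [Finset.mem_map_equiv, Equiv.symm_swap, Equiv.swap_apply_self]
    · intro 𝒜 _
      ext a
      simp [Finset.mem_map_equiv, Equiv.symm_swap, Equiv.swap_apply_self]
    · intro 𝒜 _
      have hcard : ((𝒜.map (Equiv.swap i i₀).toEmbedding) ∩ S).card = (𝒜 ∩ S).card := by
        rw [hmapS]; exact Finset.card_map _
      have hmem : i₀ ∈ 𝒜.map (Equiv.swap i i₀).toEmbedding ↔ i ∈ 𝒜 := by
        rw [Finset.mem_map_equiv, Equiv.symm_swap, Equiv.swap_apply_right]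
      simp only [hcard, hmem]
  -- Step 4: total sum of c over S equals the count
  set Q := P.filter (fun 𝒜 => (𝒜 ∩ S).Nonempty) with hQ
  have hsumc : ∑ i ∈ S, c i = (Q.card : ℝ) := by
    rw [hc, Finset.sum_comm]
    have : ∀ 𝒜 ∈ P, (∑ i ∈ S, (if i ∈ 𝒜 then ((𝒜 ∩ S).card : ℝ)⁻¹ else 0))
        = if (𝒜 ∩ S).Nonempty then (1:ℝ) else 0 := by
      intro 𝒜 _
      have hfilter : S.filter (fun i => i ∈ 𝒜) = 𝒜 ∩ S := by
        ext a; simp [Finset.mem_inter, and_comm]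
      rw [← Finset.sum_filter, hfilter, Finset.sum_const, nsmul_eq_mul]
      by_cases h : (𝒜 ∩ S).Nonempty
      · rw [if_pos h, mul_inv_cancel₀]
        exact_mod_cast (Finset.card_pos.mpr h).ne'
      · rw [if_neg h, Finset.not_nonempty_iff_eq_empty.mp h]
        simp
    rw [Finset.sum_congr rfl this, hQ, ← Finset.sum_filter]
    simp
  -- counting: Q.card + (N - S.card).choose A = N.choose A
  have hcount : Q.card + (N - S.card).choose A = N.choose A := by
    have hcompl : P.filter (fun 𝒜 => ¬(𝒜 ∩ S).Nonempty) = Finset.powersetCard A Sᶜ := by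
      ext 𝒜
      simp only [Finset.mem_filter, hP, Finset.mem_powersetCard, Finset.not_nonempty_iff_eq_empty,
        Finset.subset_univ, true_and]
      constructor
      · rintro ⟨hcard, hdis⟩
        refine ⟨fun a ha => ?_, hcard⟩
        rw [Finset.mem_compl]
        intro haS
        have : a ∈ 𝒜 ∩ S := Finset.mem_inter.mpr ⟨ha, haS⟩
        simp [hdis] at this
      · rintro ⟨hsub, hcard⟩
        refine ⟨hcard, ?_⟩
        ext a
        simp only [Finset.mem_inter, Finset.notMem_empty, iff_false]
        rintro ⟨ha, haS⟩
        exact (Finset.mem_compl.mp (hsub ha)) haS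
    have h1 := Finset.card_filter_add_card_filter_not
      (s := P) (p := fun 𝒜 => (𝒜 ∩ S).Nonempty)
    rw [hcompl] at h1
    have h2 : (Finset.powersetCard A Sᶜ).card = (N - S.card).choose A := by
      rw [Finset.card_powersetCard, Finset.card_compl, Fintype.card_fin]
    have h3 : P.card = N.choose A := by
      rw [hP, Finset.card_powersetCard, Finset.card_univ, Fintype.card_fin]
    rw [← hQ] at h1
    omega
  -- derive value of c i₀
  have hCpos : (0:ℝ) < (N.choose A : ℝ) := by exact_mod_cast Nat.choose_pos hAN
  have hnpos : (0:ℝ) < (S.card : ℝ) := by exact_mod_cast hS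
  have hsumc' : (S.card : ℝ) * c i₀ = (Q.card : ℝ) := by
    rw [← hsumc, Finset.sum_congr rfl hsym, Finset.sum_const, nsmul_eq_mul]
  have hQcast : (Q.card : ℝ) = (N.choose A : ℝ) - ((N - S.card).choose A : ℝ) := by
    have := hcount
    push_cast [← this]
    ring
  -- assemble
  rw [h2, Finset.sum_congr rfl (fun i hi => by rw [hsym i hi]), ← Finset.smul_sum,
    smul_smul]
  congr 1
  have hci₀ : c i₀ = (Q.card : ℝ) / (S.card : ℝ) := by
    field_simp at hsumc' ⊢
    linarith [hsumc']
  rw [hci₀, hQcast, inv_mul_eq_div, div_div]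
end

section
/- Let N and A be positive integers with A ≤ N, and let c be an integer with 1 ≤ c ≤ N−A. Then (C(N,A) − C(N−c,A)) / (c · C(N,A)) ≤ A/N, where C(a,b) denotes the binomial coefficient with the convention C(a,b) = 0 when b > a. (Second inequality of the paper's Lemma 2.) -/
lemma stmt5_aux (N A : ℕ) (hA : 0 < A) (hAN : A ≤ N) :
    ∀ c, c ≤ N - A → N.choose A ≤ (N - c).choose A + c * (N - 1).choose (A - 1) := by
  intro c
  induction c with
  | zero => simp
  | succ c ih =>
    intro h
    have ih' := ih (by omega)
    have h1 : N - c = (N - (c + 1)) + 1 := by omega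
    have h2 : A = (A - 1) + 1 := by omega
    have hp : (N - c).choose A
        = (N - (c+1)).choose (A-1) + (N - (c+1)).choose A := by
      rw [h1, h2, Nat.choose_succ_succ, Nat.succ_eq_add_one, ← h2]
    have hm : (N - (c+1)).choose (A-1) ≤ (N - 1).choose (A-1) :=
      Nat.choose_le_choose _ (by omega)
    calc N.choose A ≤ (N - c).choose A + c * (N - 1).choose (A - 1) := ih'
      _ = (N - (c+1)).choose A + ((N - (c+1)).choose (A-1) + c * (N - 1).choose (A - 1)) := by
          rw [hp]; ring
      _ ≤ (N - (c+1)).choose A + (c + 1) * (N - 1).choose (A - 1) := by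
          have : (N - (c+1)).choose (A-1) + c * (N - 1).choose (A - 1)
              ≤ (c + 1) * (N - 1).choose (A - 1) := by
            rw [Nat.succ_mul]; omega
          omega

/-- Second inequality of the paper's Lemma 2:
`(C(N,A) − C(N−c,A)) / (c · C(N,A)) ≤ A/N` for `1 ≤ c ≤ N − A`. -/
theorem stmt5 (N A c : ℕ) (hA : 0 < A) (hAN : A ≤ N) (hc : 1 ≤ c) (hcNA : c ≤ N - A) :
    ((N.choose A : ℝ) - ((N - c).choose A : ℝ)) / (c * (N.choose A : ℝ)) ≤ (A : ℝ) / N := by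
  have hN : 0 < N := lt_of_lt_of_le hA hAN
  have hch : 0 < N.choose A := Nat.choose_pos hAN
  have hden : (0:ℝ) < c * (N.choose A : ℝ) := by positivity
  have hNpos : (0:ℝ) < (N:ℝ) := by positivity
  rw [div_le_div_iff₀ hden hNpos]
  have key := stmt5_aux N A hA hAN c hcNA
  -- N * C(N-1, A-1) = C(N,A) * A
  have hid : N * (N - 1).choose (A - 1) = N.choose A * A := by
    have := Nat.add_one_mul_choose_eq (N - 1) (A - 1)
    have h1 : N - 1 + 1 = N := by omega
    have h2 : A - 1 + 1 = A := by omega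
    rwa [h1, h2] at this
  have keyR : (N.choose A : ℝ) - ((N - c).choose A : ℝ) ≤ c * ((N-1).choose (A-1) : ℝ) := by
    have := key
    have : (N.choose A : ℝ) ≤ ((N - c).choose A : ℝ) + c * ((N-1).choose (A-1) : ℝ) := by
      exact_mod_cast this
    linarith
  have hidR : (N:ℝ) * ((N-1).choose (A-1) : ℝ) = (N.choose A : ℝ) * A := by
    exact_mod_cast hid
  calc ((N.choose A : ℝ) - ((N - c).choose A : ℝ)) * N
      ≤ (c * ((N-1).choose (A-1) : ℝ)) * N := by
        apply mul_le_mul_of_nonneg_right keyR (le_of_lt hNpos)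
    _ = (c:ℝ) * ((N:ℝ) * ((N-1).choose (A-1) : ℝ)) := by ring
    _ = (A:ℝ) * (c * (N.choose A : ℝ)) := by rw [hidR]; ring
end

section
/- Let N and A be positive integers with A ≤ N, and define f(c) = (C(N,A) − C(N−c,A)) / (c · C(N,A)) for integers c with 1 ≤ c ≤ N−A, where C(a,b) denotes the binomial coefficient with the convention C(a,b) = 0 when b > a. Then f is monotonically nonincreasing on {1, …, N−A}; i.e., for all integers c with 2 ≤ c ≤ N−A, f(c) ≤ f(c−1). Moreover f(1) = A/N. -/
lemma aux_nat (N A : ℕ) (hA : 0 < A) :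
    ∀ d, d + A ≤ N → (N - d).choose A + d * (N - d - 1).choose (A - 1) ≤ N.choose A := by
  intro d
  induction d with
  | zero => simp
  | succ d ih =>
    intro h
    have h1 : d + A ≤ N := by omega
    have hp : (N - d).choose A = (N - d - 1).choose (A - 1) + (N - d - 1).choose A := by
      have hpas := Nat.choose_succ_succ (N - d - 1) (A - 1)
      simp only [Nat.succ_eq_add_one] at hpas
      rw [show N - d - 1 + 1 = N - d from by omega, show A - 1 + 1 = A from by omega] at hpas
      exact hpas
    have hm : (N - (d+1) - 1).choose (A - 1) ≤ (N - d - 1).choose (A - 1) :=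
      Nat.choose_le_choose _ (by omega)
    have he : N - (d+1) = N - d - 1 := by omega
    calc (N - (d+1)).choose A + (d+1) * (N - (d+1) - 1).choose (A-1)
        ≤ (N - d - 1).choose A + (d+1) * (N - d - 1).choose (A-1) := by
          rw [he]; exact Nat.add_le_add_left (Nat.mul_le_mul_left _ hm) _
      _ = (N - d).choose A + d * (N - d - 1).choose (A-1) := by rw [hp]; ring
      _ ≤ N.choose A := ih h1

/-- The per-client aggregation weight `f(c) = (C(N,A) − C(N−c,A)) / (c · C(N,A))`
is monotonically nonincreasing on `{1, …, N−A}`, i.e. `f(c) ≤ f(c−1)` for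
`2 ≤ c ≤ N−A`; moreover `f(1) = A/N`. -/
theorem stmt6 (N A : ℕ) (hA : 0 < A) (hAN : A ≤ N) :
    (∀ c : ℕ, 2 ≤ c → c ≤ N - A →
      ((N.choose A : ℝ) - ((N - c).choose A : ℝ)) / (c * (N.choose A : ℝ)) ≤
      ((N.choose A : ℝ) - ((N - (c - 1)).choose A : ℝ)) / ((c - 1 : ℕ) * (N.choose A : ℝ))) ∧
    ((N.choose A : ℝ) - ((N - 1).choose A : ℝ)) / (1 * (N.choose A : ℝ)) = (A : ℝ) / N := by
  have hC : 0 < N.choose A := Nat.choose_pos hAN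
  have hN : 0 < N := lt_of_lt_of_le hA hAN
  constructor
  · intro c hc2 hcNA
    have hcA : c + A ≤ N := by omega
    -- Pascal at step c
    have hpas : (N - (c-1)).choose A = (N - c).choose (A-1) + (N - c).choose A := by
      have hpas := Nat.choose_succ_succ (N - c) (A - 1)
      simp only [Nat.succ_eq_add_one] at hpas
      rw [show N - c + 1 = N - (c-1) from by omega, show A - 1 + 1 = A from by omega] at hpas
      exact hpas
    have haux : (N - (c-1)).choose A + (c-1) * (N - c).choose (A-1) ≤ N.choose A := by
      have := aux_nat N A hA (c-1) (by omega)
      rwa [show N - (c-1) - 1 = N - c from by omega] at this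
    have hxpos : (0:ℝ) < (N.choose A : ℝ) := by exact_mod_cast hC
    rw [div_le_div_iff₀ (by positivity) (by
        have : (0:ℝ) < ((c-1 : ℕ):ℝ) := by exact_mod_cast (by omega : 0 < c - 1)
        positivity)]
    have hcast1 : (((N - (c-1)).choose A : ℝ)) =
        ((N - c).choose (A-1) : ℝ) + ((N - c).choose A : ℝ) := by exact_mod_cast hpas
    have hcast2 : (((N - (c-1)).choose A : ℝ)) + ((c-1:ℕ):ℝ) * ((N - c).choose (A-1) : ℝ)
        ≤ (N.choose A : ℝ) := by exact_mod_cast haux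
    have hcm : ((c-1:ℕ):ℝ) = (c:ℝ) - 1 := by
      have h1 : (1:ℕ) ≤ c := by omega
      push_cast [Nat.cast_sub h1]; ring
    rw [hcm] at hcast2 ⊢
    have hkey : ((N - c).choose A : ℝ) + (c:ℝ) * ((N - c).choose (A-1) : ℝ)
        ≤ (N.choose A : ℝ) := by linarith [hcast1, hcast2]
    have hexp : ((N.choose A : ℝ) - ((N - (c-1)).choose A : ℝ)) * ((c:ℝ) * (N.choose A : ℝ))
        - ((N.choose A : ℝ) - ((N - c).choose A : ℝ)) * (((c:ℝ) - 1) * (N.choose A : ℝ))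
        = ((N.choose A : ℝ) - ((N - c).choose A : ℝ)
            - (c:ℝ) * ((N - c).choose (A-1) : ℝ)) * (N.choose A : ℝ) := by
      rw [hcast1]; ring
    have hprod : (0:ℝ) ≤ ((N.choose A : ℝ) - ((N - c).choose A : ℝ)
        - (c:ℝ) * ((N - c).choose (A-1) : ℝ)) * (N.choose A : ℝ) :=
      mul_nonneg (by linarith) hxpos.le
    linarith [hexp, hprod]
  · have hpas : N.choose A = (N-1).choose (A-1) + (N-1).choose A := by
      have hpas := Nat.choose_succ_succ (N - 1) (A - 1)
      simp only [Nat.succ_eq_add_one] at hpas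
      rw [show N - 1 + 1 = N from by omega, show A - 1 + 1 = A from by omega] at hpas
      exact hpas
    have hmul : N * (N-1).choose (A-1) = N.choose A * A := by
      have h := Nat.add_one_mul_choose_eq (N-1) (A-1)
      rwa [show N - 1 + 1 = N from by omega, show A - 1 + 1 = A from by omega] at h
    have hxpos : (0:ℝ) < (N.choose A : ℝ) := by exact_mod_cast hC
    have hNpos : (0:ℝ) < (N:ℝ) := by exact_mod_cast hN
    rw [one_mul, div_eq_div_iff hxpos.ne' hNpos.ne']
    have h1 : ((N.choose A : ℝ)) = ((N-1).choose (A-1) : ℝ) + ((N-1).choose A : ℝ) := by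
      exact_mod_cast hpas
    have h2 : (N:ℝ) * ((N-1).choose (A-1) : ℝ) = (N.choose A : ℝ) * (A:ℝ) := by
      exact_mod_cast hmul
    linear_combination (N:ℝ) * h1 + h2
end

section
/- Let N and A be positive integers with A ≤ N, and let c be an integer with 1 ≤ c ≤ N−A. Then c · C(N−c+1, A) − (c−1) · C(N−c, A) ≤ C(N,A), where C(a,b) denotes the binomial coefficient. -/
lemma choose_convex (n A : ℕ) :
    2 * (n + 1).choose A ≤ (n + 2).choose A + n.choose A := by
  cases A with
  | zero => simp
  | succ B =>
    have e1 : (n + 2).choose (B + 1) = (n + 1).choose B + (n + 1).choose (B + 1) :=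
      Nat.choose_succ_succ (n + 1) B
    have e2 : (n + 1).choose (B + 1) = n.choose B + n.choose (B + 1) :=
      Nat.choose_succ_succ n B
    have e3 : n.choose B ≤ (n + 1).choose B := Nat.choose_le_choose B (by omega)
    omega

/-- `c · C(N−c+1, A) − (c−1) · C(N−c, A) ≤ C(N,A)` for `1 ≤ c ≤ N − A`. -/
theorem stmt7 (N A c : ℕ) (hA : 0 < A) (hAN : A ≤ N) (hc : 1 ≤ c) (hcNA : c ≤ N - A) :
    (c : ℤ) * ((N - c + 1).choose A : ℤ) - ((c : ℤ) - 1) * ((N - c).choose A : ℤ) ≤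
      (N.choose A : ℤ) := by
  induction c, hc using Nat.le_induction with
  | base =>
    have h1 : N - 1 + 1 = N := by omega
    rw [h1]
    push_cast
    ring_nf
    simp
  | succ c hc ih =>
    have hcN : c + 1 ≤ N := le_trans hcNA (Nat.sub_le N A)
    have ih' := ih (by omega)
    have h1 : N - (c + 1) + 1 = N - c := by omega
    have h2 : N - c + 1 = N - (c + 1) + 2 := by omega
    set n := N - (c + 1) with hn
    have h3 : N - c = n + 1 := by omega
    rw [h3] at ih'
    have hconv := choose_convex n A
    have hconv' : (2 : ℤ) * (n + 1).choose A ≤ ((n + 2).choose A : ℤ) + (n.choose A : ℤ) := by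
      exact_mod_cast hconv
    have hc' : (1 : ℤ) ≤ (c : ℤ) := by exact_mod_cast hc
    push_cast
    nlinarith [hconv', ih', hc']
end

section
/- Let N, A, c be positive integers with A ≥ 1 and 1 ≤ c ≤ N−A. Then 1 + cA/(N − c − A + 1) ≤ Π_{i=0}^{c−1} (1 + A/(N − A − i)). (Note that all denominators are positive under these hypotheses: N − c − A + 1 ≥ 1 and N − A − i ≥ 1 for 0 ≤ i ≤ c−1.) -/
lemma aux8 (A x : ℝ) (hA : 1 ≤ A) :
    ∀ c : ℕ, 1 ≤ c → (c : ℝ) ≤ x →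
      1 + (c : ℝ) * A / (x - c + 1) ≤ ∏ i ∈ Finset.range c, (1 + A / (x - i)) := by
  intro c h1
  induction c, h1 using Nat.le_induction with
  | base =>
    intro hx
    simp only [Finset.prod_range_one, Nat.cast_one, Nat.cast_zero]
    norm_num
  | succ c hc ih =>
    intro hx
    push_cast at hx ⊢
    have hcx : (c : ℝ) ≤ x := by linarith
    have hu : (1 : ℝ) ≤ x - c := by linarith
    have hu0 : (0 : ℝ) < x - c := by linarith
    have hu1 : (0 : ℝ) < x - c + 1 := by linarith
    have hih := ih hcx
    rw [Finset.prod_range_succ]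
    have hL0 : (0 : ℝ) ≤ 1 + (c : ℝ) * A / (x - c + 1) := by positivity
    have hf0 : (0 : ℝ) ≤ 1 + A / (x - c) := by positivity
    have key : 1 + ((c : ℝ) + 1) * A / (x - (c + 1) + 1) ≤
        (1 + (c : ℝ) * A / (x - c + 1)) * (1 + A / (x - c)) := by
      have hne : x - (c + 1) + 1 = x - c := by ring
      rw [hne]
      have hcA : (0 : ℝ) ≤ (c : ℝ) * A * (A - 1) := by
        have : (0 : ℝ) ≤ A - 1 := by linarith
        positivity
      have e1 : 1 + ((c:ℝ) + 1) * A / (x - c) = ((x - c) + ((c:ℝ)+1) * A) / (x - c) := by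
        field_simp
      have e2 : (1 + (c:ℝ) * A / (x - c + 1)) * (1 + A / (x - c))
          = ((x - c + 1 + (c:ℝ) * A) * (x - c + A)) / ((x - c + 1) * (x - c)) := by
        field_simp
      rw [e1, e2, div_le_div_iff₀ hu0 (by positivity)]
      nlinarith [hcA, hu0, hu1]
    calc 1 + ((c : ℝ) + 1) * A / (x - (c + 1) + 1)
        ≤ (1 + (c : ℝ) * A / (x - c + 1)) * (1 + A / (x - c)) := key
      _ ≤ (∏ i ∈ Finset.range c, (1 + A / (x - i))) * (1 + A / (x - c)) :=
          mul_le_mul_of_nonneg_right hih hf0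

/-- `1 + cA/(N − c − A + 1) ≤ ∏_{i=0}^{c−1} (1 + A/(N − A − i))` for
`A ≥ 1` and `1 ≤ c ≤ N − A`. -/
theorem stmt8 (N A c : ℕ) (hA : 1 ≤ A) (hc : 1 ≤ c) (hcNA : c ≤ N - A) :
    1 + ((c : ℝ) * A) / ((N : ℝ) - c - A + 1) ≤
      ∏ i ∈ Finset.range c, (1 + (A : ℝ) / ((N : ℝ) - A - i)) := by
  have hAN : A ≤ N := by
    by_contra h
    push_neg at h
    omega
  have hcN : A + c ≤ N := by omega
  have hx : (c : ℝ) ≤ (N : ℝ) - A := by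
    have : (A + c : ℕ) ≤ N := hcN
    have := Nat.cast_le (α := ℝ).mpr this
    push_cast at this
    linarith
  have := aux8 (A : ℝ) ((N : ℝ) - A) (by exact_mod_cast hA) c hc hx
  have h1 : (N : ℝ) - A - c + 1 = (N : ℝ) - c - A + 1 := by ring
  rw [h1] at this
  exact this
end

section
/- Let N, A, k be positive integers with A ≥ 1, k ≥ 1, and k + 1 ≤ N − A (so that N − k − A ≥ 1, N − A − k ≥ 1, and N − k − A + 1 ≥ 2). Then (1 + kA/(N − k − A + 1)) · (1 + A/(N − A − k)) ≥ 1 + (k+1)A/(N − k − A). -/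
/-- Inductive step: `(1 + kA/(N − k − A + 1)) · (1 + A/(N − A − k)) ≥ 1 + (k+1)A/(N − k − A)`
for `A ≥ 1`, `k ≥ 1`, `k + 1 ≤ N - A`. -/
theorem stmt9 (N A k : ℕ) (hA : 1 ≤ A) (hk : 1 ≤ k) (hkNA : k + 1 ≤ N - A) :
    (1 + ((k : ℝ) * A) / ((N : ℝ) - k - A + 1)) * (1 + (A : ℝ) / ((N : ℝ) - A - k)) ≥
      1 + (((k : ℝ) + 1) * A) / ((N : ℝ) - k - A) := by
  have hN : A + k + 1 ≤ N := by omega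
  have hx : (1 : ℝ) ≤ (N : ℝ) - k - A := by
    have := (Nat.cast_le (α := ℝ)).2 hN
    push_cast at this; linarith
  have hA' : (1 : ℝ) ≤ (A : ℝ) := by exact_mod_cast hA
  have hk' : (1 : ℝ) ≤ (k : ℝ) := by exact_mod_cast hk
  have h1 : (0 : ℝ) < (N : ℝ) - k - A := by linarith
  have h2 : (0 : ℝ) < (N : ℝ) - k - A + 1 := by linarith
  have h3 : ((N : ℝ) - A - k) = (N : ℝ) - k - A := by ring
  rw [h3, ge_iff_le, ← sub_nonneg]
  have key : (1 + (k : ℝ) * A / ((N : ℝ) - k - A + 1)) * (1 + (A : ℝ) / ((N : ℝ) - k - A))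
      - (1 + ((k : ℝ) + 1) * A / ((N : ℝ) - k - A))
      = (k : ℝ) * A * (A - 1) / (((N : ℝ) - k - A) * ((N : ℝ) - k - A + 1)) := by
    field_simp; ring
  rw [key]
  have : (0:ℝ) ≤ (k : ℝ) * A * (A - 1) := by nlinarith [mul_nonneg (le_trans zero_le_one hk') (le_trans zero_le_one hA')]
  positivity
end

section
/- Let N, A, n be positive integers with A ≤ N and n ≤ N, let S be a subset of [N] with |S| = n, and let i ∈ S be fixed. Then Σ over all subsets 𝒜 ⊆ [N] with |𝒜| = A and i ∈ 𝒜 of 1/|𝒜 ∩ S| equals (C(N,A) − C(N−n,A)) / n, where C(a,b) denotes the binomial coefficient with the convention C(a,b) = 0 when b > a. -/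
open Finset

/-- Symmetry lemma: for `j ∈ S`, the sum over `A`-subsets containing `j` of
`1/|𝒜 ∩ S|` equals the same sum with `i` in place of `j`. -/
lemma swap_sum_aux {N A : ℕ} (S : Finset (Fin N)) (i j : Fin N)
    (hi : i ∈ S) (hj : j ∈ S) :
    ∑ 𝒜 ∈ (Finset.powersetCard A (Finset.univ : Finset (Fin N))).filter
        (fun 𝒜 => j ∈ 𝒜), (1 : ℝ) / ((𝒜 ∩ S).card : ℝ) =
    ∑ 𝒜 ∈ (Finset.powersetCard A (Finset.univ : Finset (Fin N))).filter
        (fun 𝒜 => i ∈ 𝒜), (1 : ℝ) / ((𝒜 ∩ S).card : ℝ) := by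
  set σ := Equiv.swap i j with hσ
  have hmemS : ∀ x : Fin N, σ x ∈ S ↔ x ∈ S := by
    intro x
    by_cases hxi : x = i
    · subst hxi; simp [hσ, Equiv.swap_apply_left, hj, hi]
    by_cases hxj : x = j
    · subst hxj; simp [hσ, Equiv.swap_apply_right, hj, hi]
    · simp [hσ, Equiv.swap_apply_of_ne_of_ne hxi hxj]
  have himgS : S.image σ = S := by
    ext x
    simp only [Finset.mem_image]
    constructor
    · rintro ⟨y, hy, rfl⟩; exact (hmemS y).mpr hy
    · intro hx
      exact ⟨σ x, (hmemS x).mpr hx, Equiv.swap_apply_self i j x⟩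
  have hcard : ∀ 𝒜 : Finset (Fin N), ((𝒜.image σ) ∩ S).card = (𝒜 ∩ S).card := by
    intro 𝒜
    have : (𝒜.image σ) ∩ S = (𝒜 ∩ S).image σ := by
      rw [Finset.image_inter _ _ σ.injective, himgS]
    rw [this, Finset.card_image_of_injective _ σ.injective]
  refine Finset.sum_bij' (fun 𝒜 _ => 𝒜.image σ) (fun 𝒜 _ => 𝒜.image σ) ?_ ?_ ?_ ?_ ?_
  · intro 𝒜 h𝒜
    simp only [Finset.mem_filter, Finset.mem_powersetCard] at h𝒜 ⊢
    refine ⟨⟨Finset.subset_univ _, by rw [Finset.card_image_of_injective _ σ.injective]; exact h𝒜.1.2⟩, ?_⟩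
    have : σ j = i := Equiv.swap_apply_right i j
    exact this ▸ Finset.mem_image_of_mem σ h𝒜.2
  · intro 𝒜 h𝒜
    simp only [Finset.mem_filter, Finset.mem_powersetCard] at h𝒜 ⊢
    refine ⟨⟨Finset.subset_univ _, by rw [Finset.card_image_of_injective _ σ.injective]; exact h𝒜.1.2⟩, ?_⟩
    have : σ i = j := Equiv.swap_apply_left i j
    exact this ▸ Finset.mem_image_of_mem σ h𝒜.2
  · intro 𝒜 _
    simp only [Finset.image_image]
    have : ⇑σ ∘ ⇑σ = id := by funext x; exact Equiv.swap_apply_self i j x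
    rw [this, Finset.image_id]
  · intro 𝒜 _
    simp only [Finset.image_image]
    have : ⇑σ ∘ ⇑σ = id := by funext x; exact Equiv.swap_apply_self i j x
    rw [this, Finset.image_id]
  · intro 𝒜 _
    rw [hcard]

/-- `∑` over all `A`-subsets `𝒜 ⊆ [N]` containing `i` of `1/|𝒜 ∩ S|` equals
`(C(N,A) − C(N−n,A)) / n`, for `i ∈ S` with `|S| = n`. -/
theorem stmt12 (N A n : ℕ) (hA : 0 < A) (hn : 0 < n) (hAN : A ≤ N) (hnN : n ≤ N)
    (S : Finset (Fin N)) (hS : S.card = n) (i : Fin N) (hi : i ∈ S) :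
    ∑ 𝒜 ∈ (Finset.powersetCard A (Finset.univ : Finset (Fin N))).filter
        (fun 𝒜 => i ∈ 𝒜),
      (1 : ℝ) / ((𝒜 ∩ S).card : ℝ) =
    ((N.choose A : ℝ) - ((N - n).choose A : ℝ)) / n := by
  set P := Finset.powersetCard A (Finset.univ : Finset (Fin N)) with hP
  set f : Finset (Fin N) → ℝ := fun 𝒜 => (1 : ℝ) / ((𝒜 ∩ S).card : ℝ) with hf
  -- sum over j ∈ S of the corresponding sums equals n times the target
  have key : ∑ j ∈ S, ∑ 𝒜 ∈ P.filter (fun 𝒜 => j ∈ 𝒜), f 𝒜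
      = (n : ℝ) * ∑ 𝒜 ∈ P.filter (fun 𝒜 => i ∈ 𝒜), f 𝒜 := by
    rw [Finset.sum_congr rfl (fun j hj => swap_sum_aux S i j hi hj)]
    rw [Finset.sum_const, hS, nsmul_eq_mul]
  -- swap the order of summation
  have swap : ∑ j ∈ S, ∑ 𝒜 ∈ P.filter (fun 𝒜 => j ∈ 𝒜), f 𝒜
      = ∑ 𝒜 ∈ P, ((𝒜 ∩ S).card : ℝ) * f 𝒜 := by
    have : ∀ j, ∑ 𝒜 ∈ P.filter (fun 𝒜 => j ∈ 𝒜), f 𝒜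
        = ∑ 𝒜 ∈ P, if j ∈ 𝒜 then f 𝒜 else 0 := fun j => Finset.sum_filter _ _
    simp_rw [this]
    rw [Finset.sum_comm]
    refine Finset.sum_congr rfl (fun 𝒜 _ => ?_)
    rw [Finset.sum_ite_mem, Finset.sum_const, nsmul_eq_mul, Finset.inter_comm]
  -- each term is 1 if 𝒜 ∩ S nonempty, else 0
  have terms : ∑ 𝒜 ∈ P, ((𝒜 ∩ S).card : ℝ) * f 𝒜
      = ((P.filter (fun 𝒜 => (𝒜 ∩ S).Nonempty)).card : ℝ) := by
    rw [Finset.card_filter, Nat.cast_sum]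
    refine Finset.sum_congr rfl (fun 𝒜 _ => ?_)
    by_cases h : (𝒜 ∩ S).Nonempty
    · have hc : (0 : ℝ) < ((𝒜 ∩ S).card : ℝ) := by
        exact_mod_cast Finset.card_pos.mpr h
      rw [if_pos h]
      simp only [hf, mul_one_div]
      rw [div_self (ne_of_gt hc), Nat.cast_one]
    · have : 𝒜 ∩ S = ∅ := Finset.not_nonempty_iff_eq_empty.mp h
      simp [hf, this, h]
  -- count: filter nonempty = total - filter empty
  have count : (P.filter (fun 𝒜 => (𝒜 ∩ S).Nonempty)).card
      = N.choose A - (N - n).choose A := by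
    have h1 : (P.filter (fun 𝒜 => ¬ (𝒜 ∩ S).Nonempty)).card = (N - n).choose A := by
      have : P.filter (fun 𝒜 => ¬ (𝒜 ∩ S).Nonempty)
          = Finset.powersetCard A Sᶜ := by
        ext 𝒜
        simp only [Finset.mem_filter, Finset.mem_powersetCard, hP,
          Finset.not_nonempty_iff_eq_empty, Finset.subset_univ, true_and,
          ← Finset.disjoint_iff_inter_eq_empty, ← le_compl_iff_disjoint_right,
          Finset.le_iff_subset]
        tauto
      rw [this, Finset.card_powersetCard, Finset.card_compl, hS,
        Fintype.card_fin]
    have h2 : P.card = N.choose A := by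
      rw [hP, Finset.card_powersetCard, Finset.card_univ, Fintype.card_fin]
    have := Finset.card_filter_add_card_filter_not
      (s := P) (p := fun 𝒜 => (𝒜 ∩ S).Nonempty)
    omega
  have hne : (n : ℝ) ≠ 0 := Nat.cast_ne_zero.mpr hn.ne'
  have hle : (N - n).choose A ≤ N.choose A :=
    Nat.choose_le_choose A (Nat.sub_le N n)
  rw [eq_div_iff hne, mul_comm, ← key, swap, terms, count]
  push_cast [hle]
  ring
end
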